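/- arXiv:math/0607387 — 3 statements merged into one kernel-verified Lean document; each statement's English description precedes it below -/
import Mathlib

section
/- Let C = (l+in, -m; k, -l+in) be the FSCc matrix of the cycle {z = u+iv : k(u²+v²) - 2lu - 2nv + m = 0}. For any g ∈ SL(2,ℝ), the matrix gCg⁻¹ is again of the form (l'+in', -m'; k', -l'+in') with real k', l', n', m', and its associated cycle is the image of the original cycle under the Möbius transformation z ↦ g·z. -/
open Complex Matrix

/-- The FSCc matrix of the cycle with parameters (k,l,n,m). -/
noncomputable def FSCc (k l n m : ℝ) : Matrix (Fin 2) (Fin 2) ℂ :=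
  !![(l : ℂ) + (n : ℂ) * I, -(m : ℂ); (k : ℂ), -(l : ℂ) + (n : ℂ) * I]

/-- Möbius action of a real 2×2 matrix on ℂ. -/
noncomputable def moebC (g : Matrix (Fin 2) (Fin 2) ℝ) (z : ℂ) : ℂ :=
  ((g 0 0 : ℂ) * z + (g 0 1 : ℂ)) / ((g 1 0 : ℂ) * z + (g 1 1 : ℂ))

/-- Complex form of the cycle equation. -/
noncomputable def cycC (k l n m : ℝ) (z : ℂ) : ℂ :=
  (k : ℂ) * z * (starRingEnd ℂ) z - (l : ℂ) * (z + (starRingEnd ℂ) z)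
    + I * (n : ℂ) * (z - (starRingEnd ℂ) z) + (m : ℂ)

lemma cycC_eq (k l n m : ℝ) (z : ℂ) :
    ((k * (z.re ^ 2 + z.im ^ 2) - 2 * l * z.re - 2 * n * z.im + m : ℝ) : ℂ)
      = cycC k l n m z := by
  apply Complex.ext <;>
    simp [cycC, Complex.mul_re, Complex.mul_im, ← Complex.ofReal_pow] <;> ring

lemma cyc_transform (k l n m : ℝ) (a b c d z : ℂ) (hdet : a * d - b * c = 1)
    (hz : c * z + d ≠ 0) (hz' : c * (starRingEnd ℂ) z + d ≠ 0) :
    ((d^2*k + 2*c*d*l + c^2*m) * ((a*z+b)/(c*z+d)) * ((a*(starRingEnd ℂ) z+b)/(c*(starRingEnd ℂ) z+d))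
      - (b*d*k + (a*d+b*c)*l + a*c*m) * ((a*z+b)/(c*z+d) + (a*(starRingEnd ℂ) z+b)/(c*(starRingEnd ℂ) z+d))
      + I*(n:ℂ)*((a*z+b)/(c*z+d) - (a*(starRingEnd ℂ) z+b)/(c*(starRingEnd ℂ) z+d))
      + (b^2*k + 2*a*b*l + a^2*m)) * ((c*z+d)*(c*(starRingEnd ℂ) z+d))
    = (k:ℂ)*z*(starRingEnd ℂ) z - (l:ℂ)*(z+(starRingEnd ℂ) z)
      + I*(n:ℂ)*(z-(starRingEnd ℂ) z) + (m:ℂ) := by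
  field_simp
  linear_combination (((a*d-b*c+1)*((k:ℂ)*z*(starRingEnd ℂ) z - l*(z+(starRingEnd ℂ) z)+m)
      + I*(n:ℂ)*(z-(starRingEnd ℂ) z)) ) * hdet

theorem FSCc_intertwines_moebius (k l n m : ℝ) (g : Matrix (Fin 2) (Fin 2) ℝ)
    (hg : g.det = 1) :
    ∃ k' l' n' m' : ℝ,
      (g.map (Complex.ofReal)) * FSCc k l n m * (g.map (Complex.ofReal))⁻¹
        = FSCc k' l' n' m' ∧
      ∀ z : ℂ, (g 1 0 : ℂ) * z + (g 1 1 : ℂ) ≠ 0 →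
        (k * (z.re ^ 2 + z.im ^ 2) - 2 * l * z.re - 2 * n * z.im + m = 0 ↔
         k' * ((moebC g z).re ^ 2 + (moebC g z).im ^ 2) - 2 * l' * (moebC g z).re
           - 2 * n' * (moebC g z).im + m' = 0) := by
  have hdet : g 0 0 * g 1 1 - g 0 1 * g 1 0 = 1 := by rw [← Matrix.det_fin_two]; exact hg
  have hdetC : (g 0 0 : ℂ) * g 1 1 - g 0 1 * g 1 0 = 1 := by
    have := congrArg (Complex.ofReal) hdet; push_cast at this; exact this
  refine ⟨g 1 1 ^ 2 * k + 2 * g 1 0 * g 1 1 * l + g 1 0 ^ 2 * m,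
          g 0 1 * g 1 1 * k + (g 0 0 * g 1 1 + g 0 1 * g 1 0) * l + g 0 0 * g 1 0 * m, n,
          g 0 1 ^ 2 * k + 2 * g 0 0 * g 0 1 * l + g 0 0 ^ 2 * m, ?_, ?_⟩
  · have hinv : (g.map (Complex.ofReal))⁻¹
        = !![(g 1 1 : ℂ), -(g 0 1 : ℂ); -(g 1 0 : ℂ), (g 0 0 : ℂ)] := by
      apply Matrix.inv_eq_right_inv
      ext i j
      fin_cases i <;> fin_cases j <;>
        simp [Matrix.mul_apply, Fin.sum_univ_two, Matrix.map_apply] <;>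
        (first | ring1 | linear_combination hdetC | linear_combination -hdetC)
    rw [hinv]
    ext i j
    fin_cases i <;> fin_cases j <;>
      simp [Matrix.mul_apply, Fin.sum_univ_two, Matrix.map_apply, FSCc] <;>
      push_cast <;>
      (first | ring1 | linear_combination ((n:ℂ)*I) * hdetC | linear_combination (2*(n:ℂ)*I) * hdetC | linear_combination (-(n:ℂ)*I) * hdetC | linear_combination (-2*(n:ℂ)*I) * hdetC | linear_combination hdetC | linear_combination -hdetC)
  · intro z hz
    set w := moebC g z with hw
    have hz' : (g 1 0 : ℂ) * (starRingEnd ℂ) z + g 1 1 ≠ 0 := by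
      intro h
      apply hz
      have h2 : (starRingEnd ℂ) ((g 1 0 : ℂ) * (starRingEnd ℂ) z + g 1 1) = 0 := by
        rw [h]; simp
      simpa using h2
    have hwconj : (starRingEnd ℂ) w
        = ((g 0 0 : ℂ) * (starRingEnd ℂ) z + g 0 1)
          / ((g 1 0 : ℂ) * (starRingEnd ℂ) z + g 1 1) := by
      rw [hw, moebC, map_div₀]; simp
    have key := cyc_transform k l n m (g 0 0) (g 0 1) (g 1 0) (g 1 1) z hdetC hz hz'
    have key2 : cycC (g 1 1 ^ 2 * k + 2 * g 1 0 * g 1 1 * l + g 1 0 ^ 2 * m)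
        (g 0 1 * g 1 1 * k + (g 0 0 * g 1 1 + g 0 1 * g 1 0) * l + g 0 0 * g 1 0 * m) n
        (g 0 1 ^ 2 * k + 2 * g 0 0 * g 0 1 * l + g 0 0 ^ 2 * m) w
        * (((g 1 0 : ℂ) * z + g 1 1) * ((g 1 0 : ℂ) * (starRingEnd ℂ) z + g 1 1))
        = cycC k l n m z := by
      rw [cycC, cycC, hwconj, hw, moebC]
      push_cast
      linear_combination key
    have hne : ((g 1 0 : ℂ) * z + g 1 1) * ((g 1 0 : ℂ) * (starRingEnd ℂ) z + g 1 1) ≠ 0 :=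
      mul_ne_zero hz hz'
    rw [← Complex.ofReal_eq_zero, ← Complex.ofReal_eq_zero, cycC_eq, cycC_eq, ← key2,
      mul_eq_zero]
    simp [hne]
end

section
/- For the FSCc matrix Z_z = (z, -z·conj(z); 1, -conj(z)) associated to the zero-radius cycle at z ∈ ℂ, and any g ∈ SL(2,ℝ) with cz+d ≠ 0, the similarity transform g·Z_z·g⁻¹ equals a nonzero real scalar multiple of Z_{g·z}, the zero-radius cycle matrix at the Möbius image g·z. -/
/-!
`Z_z` has rank one: it is the column `(z, 1)` times the row `(1, -z̄)`. A real matrix `g` moves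
the column to `(cz + d) (g·z, 1)`, and its adjugate moves the row to `(cz̄ + d) (1, -conj (g·z))`.
For `det g = 1` the inverse is the adjugate, so `g Z_z g⁻¹ = |cz + d|² Z_{g·z}`.
-/

open Complex Matrix

/-- The FSCc matrix of the zero-radius cycle at `z`. -/
def zeroCycle (z : ℂ) : Matrix (Fin 2) (Fin 2) ℂ :=
  !![z, -(z * (starRingEnd ℂ) z); 1, -((starRingEnd ℂ) z)]

open ComplexConjugate

theorem zeroCycle_eq_vecMulVec (z : ℂ) : zeroCycle z = vecMulVec ![z, 1] ![1, -conj z] := by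
  ext i j
  fin_cases i <;> fin_cases j <;> simp [zeroCycle, vecMulVec_apply]

theorem conj_moebC (g : Matrix (Fin 2) (Fin 2) ℝ) (z : ℂ) : conj (moebC g z) = moebC g (conj z) := by
  simp [moebC]

theorem map_ofReal_mulVec_eq_smul (g : Matrix (Fin 2) (Fin 2) ℝ) {z : ℂ}
    (hz : (g 1 0 : ℂ) * z + g 1 1 ≠ 0) :
    g.map ofReal *ᵥ ![z, 1] = ((g 1 0 : ℂ) * z + g 1 1) • ![moebC g z, 1] := by
  ext i
  fin_cases i <;> simp [mulVec, dotProduct, Fin.sum_univ_two, moebC, mul_div_cancel₀ _ hz]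

theorem vecMul_adjugate_map_ofReal_eq_smul (g : Matrix (Fin 2) (Fin 2) ℝ) {z : ℂ}
    (hz : (g 1 0 : ℂ) * z + g 1 1 ≠ 0) :
    ![1, -z] ᵥ* adjugate (g.map ofReal) = ((g 1 0 : ℂ) * z + g 1 1) • ![1, -moebC g z] := by
  ext i
  fin_cases i <;> simp [vecMul, dotProduct, Fin.sum_univ_two, adjugate_fin_two, moebC,
    mul_div_cancel₀ _ hz] <;> ring

theorem zero_radius_cycle_similarity (g : Matrix (Fin 2) (Fin 2) ℝ) (hg : g.det = 1)
    (z : ℂ) (hz : (g 1 0 : ℂ) * z + (g 1 1 : ℂ) ≠ 0) :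
    ∃ lam : ℝ, lam ≠ 0 ∧
      (g.map (Complex.ofReal)) * zeroCycle z * (g.map (Complex.ofReal))⁻¹
        = (lam : ℂ) • zeroCycle (moebC g z) := by
  have hdet : (g.map ofReal).det = 1 := (ofRealHom.map_det g).symm.trans (by simp [hg])
  have hz_conj : (g 1 0 : ℂ) * conj z + g 1 1 ≠ 0 := by
    simpa using (map_ne_zero (starRingEnd ℂ)).mpr hz
  refine ⟨normSq ((g 1 0 : ℂ) * z + g 1 1), normSq_eq_zero.not.mpr hz, ?_⟩
  rw [Matrix.inv_def, hdet, Ring.inverse_one, one_smul, zeroCycle_eq_vecMulVec, mul_vecMulVec,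
    vecMulVec_mul, map_ofReal_mulVec_eq_smul g hz, vecMul_adjugate_map_ofReal_eq_smul g hz_conj,
    ← conj_moebC, smul_vecMulVec, vecMulVec_smul, smul_smul, ← zeroCycle_eq_vecMulVec,
    ← mul_conj]
  simp
end

section
/- If C and C̃ are FSCc matrices of cycles (matrices of the form (l+in, -m; k, -l+in) with real entries k,l,n,m), then the product C C̃ C is again a matrix of this form, i.e., reflection of one cycle in another yields a cycle. -/
open Complex Matrix

theorem reflection_of_cycle_is_cycle (k l n m k' l' n' m' : ℝ) :
    ∃ k'' l'' n'' m'' : ℝ,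
      FSCc k l n m * FSCc k' l' n' m' * FSCc k l n m = FSCc k'' l'' n'' m'' := by
  refine ⟨2*k*l*l' - l^2*k' - k^2*m' - n^2*k' - 2*n*n'*k,
    l^2*l' + k*m*l' - l*m*k' - k*l*m' - n^2*l' - 2*n*n'*l,
    n*(2*l*l' - m*k' - k*m') + n'*(l^2 - k*m - n^2),
    2*l*m*l' - m^2*k' - l^2*m' - n^2*m' - 2*n*n'*m, ?_⟩
  simp only [FSCc, Matrix.mul_fin_two]
  ext i j
  fin_cases i <;> fin_cases j <;>
    simp [Complex.ext_iff, pow_two] <;> constructor <;> ring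
end
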